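/- If R_n(a,r) is bipartite with n, a even and r odd, then the sets V_1 = {u_i, v_{i+1} : i even} and V_2 = {u_i, v_{i+1} : i odd} form a bipartition of R_n(a,r). -/

import Mathlib

open SimpleGraph

/-- The Rose Window graph `R_n(a,r)`. Vertices `Sum.inl i = uᵢ`, `Sum.inr i = vᵢ`. -/
def roseWindow (n : ℕ) (a r : ZMod n) : SimpleGraph (ZMod n ⊕ ZMod n) :=
  SimpleGraph.fromRel (fun x y =>
    match x, y with
    | Sum.inl i, Sum.inl i' => i' = i + 1
    | Sum.inr i, Sum.inr i' => i' = i + r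
    | Sum.inl i', Sum.inr i => i' = i ∨ i' = i + a
    | _, _ => False)

/-- The canonical double cover of a graph. -/
def cdc {V : Type*} (G : SimpleGraph V) : SimpleGraph (V × ZMod 2) where
  Adj x y := G.Adj x.1 y.1 ∧ x.2 ≠ y.2
  symm := ⟨fun x y h => ⟨h.1.symm, h.2.symm⟩⟩
  loopless := ⟨fun x h => h.2 rfl⟩

/-- The automorphism group of a graph, as a subgroup of the permutations of vertices. -/
def autSubgroup {V : Type*} (G : SimpleGraph V) : Subgroup (Equiv.Perm V) where
  carrier := {σ | ∀ x y, G.Adj (σ x) (σ y) ↔ G.Adj x y}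
  one_mem' := by intro x y; rfl
  mul_mem' := by
    intro σ τ hσ hτ x y
    simpa [Equiv.Perm.mul_apply] using (hσ (τ x) (τ y)).trans (hτ x y)
  inv_mem' := by
    intro σ hσ x y
    conv_rhs => rw [← (σ.apply_symm_apply x : σ (σ⁻¹ x) = x), ← (σ.apply_symm_apply y : σ (σ⁻¹ y) = y)]
    exact (hσ (σ⁻¹ x) (σ⁻¹ y)).symm

/-! For even `n`, reduction mod 2 is a ring homomorphism `ZMod n →+* ZMod 2` that reads off the
parity of `ZMod.val`. Colouring `uᵢ` by `i mod 2` and `vᵢ` by `i + 1 mod 2` is a proper 2-colouring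
of `R_n(a,r)`: along rim and hub edges the index changes by `1` or `r`, both odd, along spokes by
`0` or `a`, both even, and the shifted colour of the `vᵢ` makes up for the difference. `V₁` and `V₂`
are its two colour classes. -/

namespace ZMod

variable {n : ℕ} (h : 2 ∣ n)

theorem even_val_iff_castHom_eq_zero [NeZero n] (x : ZMod n) :
    Even x.val ↔ castHom h (ZMod 2) x = 0 := by
  rw [castHom_apply, cast_eq_val, natCast_eq_zero_iff_even]

theorem odd_val_iff_castHom_eq_one [NeZero n] (x : ZMod n) :
    Odd x.val ↔ castHom h (ZMod 2) x = 1 := by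
  rw [castHom_apply, cast_eq_val, natCast_eq_one_iff_odd]

end ZMod

namespace roseWindow

open ZMod

variable {n : ℕ} (h : 2 ∣ n) {a r : ZMod n}

def parityColoring (ha : castHom h (ZMod 2) a = 0) (hr : castHom h (ZMod 2) r = 1) :
    (roseWindow n a r).Coloring (ZMod 2) :=
  Coloring.mk (Sum.elim (castHom h (ZMod 2)) (castHom h (ZMod 2) · + 1)) fun {x y} hxy => by
    have hne : ∀ z : ZMod 2, z ≠ z + 1 := by decide
    have hne' : ∀ z : ZMod 2, z + 1 ≠ z := by decide
    obtain ⟨-, hxy⟩ := hxy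
    rcases x with i | i <;> rcases y with j | j <;>
      simp only [Sum.elim_inl, Sum.elim_inr, or_false, false_or] at hxy ⊢ <;>
      rcases hxy with rfl | rfl <;>
      simp only [map_add, map_one, ha, hr, add_zero, ne_eq, hne, hne', not_false_eq_true]

variable {h} (ha : castHom h (ZMod 2) a = 0) (hr : castHom h (ZMod 2) r = 1) (i : ZMod n)

@[simp]
theorem parityColoring_inl : parityColoring h ha hr (.inl i) = castHom h (ZMod 2) i := rfl

@[simp]
theorem parityColoring_inr : parityColoring h ha hr (.inr i) = castHom h (ZMod 2) i + 1 := rfl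

end roseWindow

theorem roseWindow_bipartition_general (n a r : ℕ) (hn : 3 ≤ n) (hne : Even n) (hae : Even a)
    (hro : Odd r) :
    let V1 : Set (ZMod n ⊕ ZMod n) :=
      {x | Sum.elim (fun i => Even (ZMod.val i)) (fun i => Odd (ZMod.val i)) x}
    let V2 : Set (ZMod n ⊕ ZMod n) :=
      {x | Sum.elim (fun i => Odd (ZMod.val i)) (fun i => Even (ZMod.val i)) x}
    V1 ∩ V2 = ∅ ∧ V1 ∪ V2 = Set.univ ∧
    ∀ x y, (roseWindow n a r).Adj x y →
      (x ∈ V1 ∧ y ∈ V2) ∨ (x ∈ V2 ∧ y ∈ V1) := by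
  have : NeZero n := ⟨by omega⟩
  intro V1 V2
  have h2 : 2 ∣ n := even_iff_two_dvd.mp hne
  let c := roseWindow.parityColoring h2 (a := a) (r := r)
    (by rw [map_natCast, ZMod.natCast_eq_zero_iff_even]; exact hae)
    (by rw [map_natCast, ZMod.natCast_eq_one_iff_odd]; exact hro)
  have hV1 : ∀ x, x ∈ V1 ↔ c x = 0 := by
    have h1 : ∀ z : ZMod 2, z + 1 = 0 ↔ z = 1 := by decide
    rintro (i | i) <;>
      simp [V1, c, ZMod.even_val_iff_castHom_eq_zero h2, ZMod.odd_val_iff_castHom_eq_one h2,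
        h1]
  have hV2 : ∀ x, x ∈ V2 ↔ c x = 1 := by
    rintro (i | i) <;>
      simp [V2, c, ZMod.even_val_iff_castHom_eq_zero h2, ZMod.odd_val_iff_castHom_eq_one h2]
  have hcases : ∀ z : ZMod 2, z = 0 ∨ z = 1 := by decide
  have hcases_ne : ∀ z w : ZMod 2, z ≠ w → (z = 0 ∧ w = 1) ∨ (z = 1 ∧ w = 0) := by decide
  refine ⟨?_, ?_, fun x y hxy => ?_⟩
  · exact Set.eq_empty_iff_forall_notMem.mpr fun x ⟨hx1, hx2⟩ =>
      zero_ne_one (((hV1 x).1 hx1).symm.trans ((hV2 x).1 hx2))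
  · exact Set.eq_univ_of_forall fun x => (hcases (c x)).imp (hV1 x).2 (hV2 x).2
  · exact (hcases_ne _ _ (c.valid hxy)).imp (And.imp (hV1 x).2 (hV2 y).2)
      (And.imp (hV2 x).2 (hV1 y).2)

/-- if `n, a` are even and `r` is odd, then
`V₁ = {uᵢ, vᵢ₊₁ : i even}` and `V₂ = {uᵢ, vᵢ₊₁ : i odd}` form a bipartition of `R_n(a,r)`. -/
theorem roseWindow_bipartition (n a r : ℕ) (hn : 3 ≤ n) (hne : Even n) (hae : Even a)
    (hro : Odd r) (ha : (a : ZMod n) ≠ 0) (hr : (r : ZMod n) ≠ 0) :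
    let V1 : Set (ZMod n ⊕ ZMod n) :=
      {x | Sum.elim (fun i => Even (ZMod.val i)) (fun i => Odd (ZMod.val i)) x}
    let V2 : Set (ZMod n ⊕ ZMod n) :=
      {x | Sum.elim (fun i => Odd (ZMod.val i)) (fun i => Even (ZMod.val i)) x}
    V1 ∩ V2 = ∅ ∧ V1 ∪ V2 = Set.univ ∧
    ∀ x y, (roseWindow n a r).Adj x y →
      (x ∈ V1 ∧ y ∈ V2) ∨ (x ∈ V2 ∧ y ∈ V1) :=
  roseWindow_bipartition_general n a r hn hne hae hro
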